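/- Let d ≥ 1 and let X be an aperiodic minimal subshift over a nonempty finite alphabet. Then the path-connected components of the suspension SX are exactly the ℝ^d-orbits: for every T ∈ SX, the path component of T in SX equals {t +ᵥ T : t ∈ ℝ^d}. -/

import Mathlib

open Filter Topology

abbrev Zd (d : ℕ) := Fin d → ℤ
abbrev Rd (d : ℕ) := EuclideanSpace ℝ (Fin d)

def toRd {d : ℕ} (n : Zd d) : Rd d := WithLp.toLp 2 (fun i => (n i : ℝ))

def shift {d : ℕ} {A : Type*} (n : Zd d) (ω : Zd d → A) : Zd d → A := fun k => ω (k - n)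

structure IsSubshift {d : ℕ} {A : Type*} [TopologicalSpace A] (X : Set (Zd d → A)) : Prop where
  nonempty : X.Nonempty
  closed : IsClosed X
  shift_mem : ∀ n : Zd d, ∀ ω ∈ X, shift n ω ∈ X

def IsMinimal {d : ℕ} {A : Type*} [TopologicalSpace A] (X : Set (Zd d → A)) : Prop :=
  ∀ ω ∈ X, X ⊆ closure {ω' | ∃ n : Zd d, ω' = shift n ω}

def IsAperiodic {d : ℕ} {A : Type*} (X : Set (Zd d → A)) : Prop :=
  ∀ ω ∈ X, ∀ n : Zd d, shift n ω = ω → n = 0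

def suspRel {d : ℕ} {A : Type*} [TopologicalSpace A] (X : Set (Zd d → A)) :
    X × Rd d → X × Rd d → Prop :=
  fun p q => ∃ n : Zd d, (q.1 : Zd d → A) = shift n (p.1 : Zd d → A) ∧ q.2 = p.2 - toRd n

abbrev Susp {d : ℕ} {A : Type*} [TopologicalSpace A] (X : Set (Zd d → A)) :=
  Quot (suspRel X)

instance {d : ℕ} {A : Type*} [TopologicalSpace A] (X : Set (Zd d → A)) :
    VAdd (Rd d) (Susp X) where
  vadd t := Quot.lift (fun p => Quot.mk (suspRel X) (p.1, p.2 + t))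
    (fun p q hpq => by
      obtain ⟨n, h1, h2⟩ := hpq
      exact Quot.sound ⟨n, h1, by rw [h2, sub_add_eq_add_sub]⟩)

def iota {d : ℕ} {A : Type*} [TopologicalSpace A] (X : Set (Zd d → A)) : X → Susp X :=
  fun ω => Quot.mk _ (ω, 0)

def box (d : ℕ) (n : ℕ) : Set (Zd d) := {k | ∀ i, |k i| ≤ (n : ℤ)}

noncomputable def complexity {d : ℕ} {A : Type*} (X : Set (Zd d → A)) (n : ℕ) : ℕ :=
  Set.ncard ((fun ω => (fun k : box d n => ω k.1)) '' X)

noncomputable def repetitivity {d : ℕ} {A : Type*} (X : Set (Zd d → A)) (n : ℕ) : ℝ :=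
  sInf {C : ℝ | 0 ≤ C ∧ ∀ ω ∈ X, ∀ ω₀ ∈ X, ∃ k : Zd d,
    ‖toRd k‖ ≤ C ∧ ∀ j ∈ box d n, shift k ω j = ω₀ j}

def IsCocycleFor {d : ℕ} {A A' : Type*} [TopologicalSpace A] [TopologicalSpace A']
    {X : Set (Zd d → A)} {X' : Set (Zd d → A')}
    (h : Susp X ≃ₜ Susp X') (c : Susp X × Rd d → Rd d) : Prop :=
  ∀ (T : Susp X) (x : Rd d), h (x +ᵥ T) = c (T, x) +ᵥ h T

/-!
The quotient map `X × ℝ^d → SX` is a covering map: `ℤ^d` acts on `X × ℝ^d` by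
`n +ᵥ (ω, x) = (σⁿ ω, x - n)`, the fibres of the quotient map are its orbits, and it moves the
`ℝ^d`-coordinate by lattice vectors, so a ball of radius `1/2` in that coordinate is disjoint from
its translates. A path in `SX` therefore lifts to `X × ℝ^d`, and the `X`-coordinate of the lift is
constant because `X` is totally disconnected; hence the path stays in one `ℝ^d`-orbit. Conversely
an orbit is path-connected, being a continuous image of `ℝ^d`.
-/

section

variable {d : ℕ} {A : Type*}

lemma shift_zero (ω : Zd d → A) : shift 0 ω = ω := by
  funext k
  simp [shift]

lemma shift_add (m n : Zd d) (ω : Zd d → A) : shift (m + n) ω = shift m (shift n ω) := by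
  funext k
  simp only [shift, sub_add_eq_sub_sub]

lemma toRd_zero : toRd (0 : Zd d) = 0 := by
  ext i
  simp [toRd]

lemma toRd_add (m n : Zd d) : toRd (m + n) = toRd m + toRd n := by
  ext i
  simp [toRd]

lemma eq_zero_of_norm_toRd_lt_one {n : Zd d} (hn : ‖toRd n‖ < 1) : n = 0 := by
  funext i
  have hi : |(n i : ℝ)| < 1 := by
    simpa [toRd] using (PiLp.norm_apply_le (toRd n) i).trans_lt hn
  exact Int.abs_lt_one_iff.mp (by exact_mod_cast hi)

end

section

variable {d : ℕ} {A : Type*} [TopologicalSpace A] {X : Set (Zd d → A)}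

lemma suspMk_vadd (t : Rd d) (p : X × Rd d) :
    t +ᵥ Quot.mk (suspRel X) p = Quot.mk (suspRel X) (p.1, p.2 + t) :=
  rfl

lemma suspMk_eq_vadd_suspMk (ω : X) (x y : Rd d) :
    Quot.mk (suspRel X) (ω, y) = (y - x) +ᵥ Quot.mk (suspRel X) (ω, x) := by
  rw [suspMk_vadd, add_sub_cancel]

lemma susp_zero_vadd (T : Susp X) : (0 : Rd d) +ᵥ T = T := by
  induction T using Quot.ind with
  | mk p => rw [suspMk_vadd, add_zero]

lemma continuous_vadd_const_susp (T : Susp X) : Continuous fun t : Rd d => t +ᵥ T := by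
  induction T using Quot.ind with
  | mk p => exact continuous_quot_mk.comp (by fun_prop)

lemma joined_vadd_susp (t : Rd d) (T : Susp X) : Joined T (t +ᵥ T) := by
  simpa only [susp_zero_vadd] using
    (PathConnectedSpace.joined (0 : Rd d) t).map (continuous_vadd_const_susp T)

abbrev suspAction (hX : ∀ n : Zd d, ∀ ω ∈ X, shift n ω ∈ X) : AddAction (Zd d) (X × Rd d) where
  vadd n p := (⟨shift n p.1, hX n p.1 p.1.2⟩, p.2 - toRd n)
  zero_vadd p := by
    ext1
    · exact Subtype.ext (shift_zero _)
    · exact (congrArg (p.2 - ·) toRd_zero).trans (sub_zero _)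
  add_vadd m n p := by
    ext1
    · exact Subtype.ext (shift_add m n _)
    · show p.2 - toRd (m + n) = p.2 - toRd n - toRd m
      rw [toRd_add]
      abel

theorem isCoveringMap_suspMk (hX : ∀ n : Zd d, ∀ ω ∈ X, shift n ω ∈ X) :
    IsCoveringMap (Quot.mk (suspRel X)) := by
  let := suspAction hX
  have vadd_def : ∀ (n : Zd d) (p : X × Rd d),
      n +ᵥ p = (⟨shift n p.1, hX n p.1 p.1.2⟩, p.2 - toRd n) := fun _ _ => rfl
  have suspRel_iff : ∀ p q, suspRel X p q ↔ q ∈ AddAction.orbit (Zd d) p := by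
    refine fun p q => ⟨fun ⟨n, h1, h2⟩ => ⟨n, ?_⟩, fun ⟨n, hn⟩ => ⟨n, ?_⟩⟩
    · exact (Prod.ext (Subtype.ext h1) h2).symm
    · subst hn; exact ⟨rfl, rfl⟩
  refine IsAddQuotientCoveringMap.isCoveringMap _ (Zd d)
    { toIsQuotientMap := isQuotientMap_quot_mk
      continuous_const_vadd := fun n => ?_
      apply_eq_iff_mem_orbit := ?_
      disjoint := fun e => ?_ }
  · simp only [vadd_def]
    refine Continuous.prodMk (Continuous.subtype_mk ?_ _) (by fun_prop)
    exact continuous_pi fun k =>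
      (continuous_apply _).comp (continuous_subtype_val.comp continuous_fst)
  · have hr : suspRel X = AddAction.orbitRel (Zd d) (X × Rd d) := by
      ext p q
      exact (suspRel_iff p q).trans (AddAction.mem_orbit_symm.trans AddAction.orbitRel_apply.symm)
    intro e₁ e₂
    rw [Quot.eq, hr, (AddAction.orbitRel _ _).iseqv.eqvGen_iff, AddAction.orbitRel_apply]
  · refine ⟨Set.univ ×ˢ Metric.ball e.2 (1 / 2),
      prod_mem_nhds Filter.univ_mem (Metric.ball_mem_nhds _ one_half_pos), ?_⟩
    rintro n ⟨_, ⟨p, hp, rfl⟩, hnp⟩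
    apply eq_zero_of_norm_toRd_lt_one
    have h1 : dist p.2 e.2 < 1 / 2 := hp.2
    have h2 : dist (p.2 - toRd n) e.2 < 1 / 2 := hnp.2
    calc ‖toRd n‖ = dist p.2 (p.2 - toRd n) := by rw [dist_eq_norm, sub_sub_cancel]
      _ < 1 := by linarith [dist_triangle_right p.2 (p.2 - toRd n) e.2]

theorem exists_vadd_eq_of_joined [TotallyDisconnectedSpace A]
    (hX : ∀ n : Zd d, ∀ ω ∈ X, shift n ω ∈ X) {T S : Susp X} (h : Joined T S) :
    ∃ t : Rd d, S = t +ᵥ T := by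
  obtain ⟨γ⟩ := h
  obtain ⟨p, rfl⟩ := Quot.exists_rep T
  obtain ⟨Γ, hΓ, hΓ0⟩ := (isCoveringMap_suspMk hX).exists_path_lifts
    γ.toContinuousMap p γ.source
  have hω : (Γ 1).1 = p.1 := by
    rw [← hΓ0]
    exact TotallyDisconnectedSpace.eq_of_continuous (fun s => (Γ s).1) (by fun_prop) 1 0
  refine ⟨(Γ 1).2 - p.2, ?_⟩
  calc S = Quot.mk (suspRel X) (Γ 1) := by rw [← γ.target]; exact (congrFun hΓ 1).symm
    _ = Quot.mk (suspRel X) (p.1, (Γ 1).2) := by rw [← hω]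
    _ = ((Γ 1).2 - p.2) +ᵥ Quot.mk (suspRel X) p := suspMk_eq_vadd_suspMk p.1 p.2 (Γ 1).2

end

theorem path_components_are_orbits_general
    {d : ℕ}
    {A : Type*} [TopologicalSpace A] [DiscreteTopology A]
    (X : Set (Zd d → A))
    (hX : IsSubshift X) :
    ∀ T : Susp X, pathComponent T = {S : Susp X | ∃ t : Rd d, S = t +ᵥ T} := by
  intro T
  ext S
  exact ⟨exists_vadd_eq_of_joined hX.shift_mem, fun ⟨t, hS⟩ => hS ▸ joined_vadd_susp t T⟩

theorem path_components_are_orbits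
    {d : ℕ} (hd : 1 ≤ d)
    {A : Type*} [Fintype A] [Nonempty A] [TopologicalSpace A] [DiscreteTopology A]
    (X : Set (Zd d → A))
    (hX : IsSubshift X) (hXmin : IsMinimal X) (hXap : IsAperiodic X) :
    ∀ T : Susp X, pathComponent T = {S : Susp X | ∃ t : Rd d, S = t +ᵥ T} :=
  path_components_are_orbits_general X hX
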